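/- Let X = (X_1,…,X_n) where each X_i = (X_{i,1},…,X_{i,d_i}) is an ℝ^{d_i}-valued random variable, and let U_{i,k} (1 ≤ i ≤ n, 1 ≤ k ≤ d_i) be i.i.d. uniform on [0,1] random variables independent of X. Then the random vectors X_1,…,X_n are independent if and only if their componentwise distributional transforms T_{X_1}(X_1,U_1),…,T_{X_n}(X_n,U_n) are independent. -/

import Mathlib

open MeasureTheory ProbabilityTheory Set Filter

/-!
If the `X i` are independent, so are the pairs `(X i, U i)`: the `U i` are independent because
their coordinates are, and the family `X` is independent of the family `U`. Each transform is a
measurable function of such a pair.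

Conversely, writing `F⁻¹` for the quantile function of `X i k`, almost surely
`F⁻¹ (T (X i k, U i k)) = X i k`: this holds as soon as `U i k ∈ (0, 1]` and every interval
`(x, X i k]` has positive mass, and both hold almost surely. So each `X i` agrees a.s. with a
measurable function of its transform, and independence passes back.
-/

noncomputable def distTransform {Ω : Type*} [MeasurableSpace Ω] (P : Measure Ω)
    (X : Ω → ℝ) (x u : ℝ) : ℝ :=
  (P {ω | X ω < x}).toReal + u * (P {ω | X ω = x}).toReal

namespace ProbabilityTheory

section

variable {Ω : Type*} [MeasurableSpace Ω] {P : Measure Ω} [IsProbabilityMeasure P]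

lemma iIndepFun.curry {ι : Type*} {κ : ι → Type*} {𝓧 : (i : ι) → κ i → Type*}
    [∀ i j, MeasurableSpace (𝓧 i j)] {X : (i : ι) → (j : κ i) → Ω → 𝓧 i j}
    (mX : ∀ i j, Measurable (X i j)) (h : iIndepFun (fun (p : Σ i, κ i) ω ↦ X p.1 p.2 ω) P) :
    iIndepFun (fun i ω ↦ (X i · ω)) P := by
  have hrow i : P.map (fun ω j ↦ X i j ω) = Measure.infinitePi fun j ↦ P.map (X i j) := by
    have hi := h.precomp (sigma_mk_injective (i := i))
    exact (iIndepFun_iff_map_fun_eq_infinitePi_map (by fun_prop)).1 hi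
  rw [iIndepFun_iff_map_fun_eq_infinitePi_map (by fun_prop)]
  calc P.map (fun ω i j ↦ X i j ω)
      = (P.map fun ω (p : Σ i, κ i) ↦ X p.1 p.2 ω).map (MeasurableEquiv.piCurry 𝓧) := by
        rw [Measure.map_map (by fun_prop) (by fun_prop)]; rfl
    _ = Measure.infinitePi fun i ↦ Measure.infinitePi fun j ↦ P.map (X i j) := by
        have _ i j : IsProbabilityMeasure (P.map (X i j)) :=
          Measure.isProbabilityMeasure_map (mX i j).aemeasurable
        rw [(iIndepFun_iff_map_fun_eq_infinitePi_map (by fun_prop)).1 h]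
        exact Measure.infinitePi_map_piCurry fun i j ↦ P.map (X i j)
    _ = Measure.infinitePi fun i ↦ P.map (fun ω j ↦ X i j ω) := by simp_rw [hrow]

lemma iIndepFun.prodMk {ι : Type*} [Fintype ι] {β γ : ι → Type*}
    [∀ i, MeasurableSpace (β i)] [∀ i, MeasurableSpace (γ i)]
    {f : ∀ i, Ω → β i} {g : ∀ i, Ω → γ i} (hf : ∀ i, Measurable (f i))
    (hg : ∀ i, Measurable (g i)) (hfi : iIndepFun f P) (hgi : iIndepFun g P)
    (hfg : IndepFun (fun ω i ↦ f i ω) (fun ω i ↦ g i ω) P) :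
    iIndepFun (fun i ω ↦ (f i ω, g i ω)) P := by
  have hpair i : P.map (fun ω ↦ (f i ω, g i ω)) = (P.map (f i)).prod (P.map (g i)) :=
    (indepFun_iff_map_prod_eq_prod_map_map (hf i).aemeasurable (hg i).aemeasurable).1
      (hfg.comp (measurable_pi_apply i) (measurable_pi_apply i))
  rw [iIndepFun_iff_map_fun_eq_pi_map fun i ↦ ((hf i).prodMk (hg i)).aemeasurable]
  simp_rw [hpair]
  refine (Measure.pi_eq_generateFrom (fun _ ↦ generateFrom_prod) (fun _ ↦ isPiSystem_prod)
    (fun i ↦ (P.map (f i)).toFiniteSpanningSetsIn.prod (P.map (g i)).toFiniteSpanningSetsIn)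
    fun s hs ↦ ?_).symm
  choose A hA B hB hAB using hs
  obtain rfl : s = fun i ↦ A i ×ˢ B i := funext fun i ↦ (hAB i).symm
  have hA' : MeasurableSet (univ.pi A) := .univ_pi hA
  have hB' : MeasurableSet (univ.pi B) := .univ_pi hB
  calc P.map (fun ω i ↦ (f i ω, g i ω)) (univ.pi fun i ↦ A i ×ˢ B i)
      = P ((fun ω i ↦ f i ω) ⁻¹' univ.pi A ∩ (fun ω i ↦ g i ω) ⁻¹' univ.pi B) := by
        rw [Measure.map_apply (by fun_prop) (.univ_pi fun i ↦ (hA i).prod (hB i))]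
        congr 1; ext ω; simp [forall_and]
    _ = P.map (fun ω i ↦ f i ω) (univ.pi A) * P.map (fun ω i ↦ g i ω) (univ.pi B) := by
        rw [hfg.measure_inter_preimage_eq_mul _ _ hA' hB', Measure.map_apply (by fun_prop) hA',
          Measure.map_apply (by fun_prop) hB']
    _ = ∏ i, (P.map (f i)).prod (P.map (g i)) (A i ×ˢ B i) := by
        rw [(iIndepFun_iff_map_fun_eq_pi_map fun i ↦ (hf i).aemeasurable).1 hfi,
          (iIndepFun_iff_map_fun_eq_pi_map fun i ↦ (hg i).aemeasurable).1 hgi,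
          Measure.pi_pi, Measure.pi_pi, ← Finset.prod_mul_distrib]
        simp_rw [Measure.prod_prod]

end

/-- Valued in `EReal` so that it is monotone on all of `ℝ` (it is `⊥` for `t ≤ 0` and `⊤` when
no `x` qualifies), which makes it measurable for free. -/
noncomputable def quantile (μ : Measure ℝ) (t : ℝ) : EReal :=
  ⨅ (x : ℝ) (_ : t ≤ cdf μ x), (x : EReal)

lemma monotone_quantile (μ : Measure ℝ) : Monotone (quantile μ) :=
  fun _ _ hst ↦ iInf_mono fun _ ↦ iInf_mono' fun hx ↦ ⟨hst.trans hx, le_rfl⟩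

lemma measurable_quantile (μ : Measure ℝ) : Measurable (quantile μ) :=
  (monotone_quantile μ).measurable

lemma measureReal_Iic_eq_Iio_add_singleton {α : Type*} [LinearOrder α] [MeasurableSpace α]
    [MeasurableSingletonClass α] (μ : Measure α) [IsFiniteMeasure μ] (x : α) :
    μ.real (Iic x) = μ.real (Iio x) + μ.real {x} := by
  rw [← Iio_union_right, measureReal_union (by simp) (measurableSet_singleton x)]

lemma quantile_measureReal_Iio_add_mul {μ : Measure ℝ} [IsProbabilityMeasure μ] {y u : ℝ}
    (hu : u ∈ Ioc 0 1) (hy : ∀ x < y, μ (Ioc x y) ≠ 0) :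
    quantile μ (μ.real (Iio y) + u * μ.real {y}) = y := by
  have hatom : 0 ≤ μ.real {y} := measureReal_nonneg
  have hle : μ.real (Iio y) + u * μ.real {y} ≤ cdf μ y := by
    rw [cdf_eq_real, measureReal_Iic_eq_Iio_add_singleton]
    nlinarith [hu.2]
  have hlt : ∀ x < y, cdf μ x < μ.real (Iio y) + u * μ.real {y} := by
    intro x hxy
    have hIio : μ.real (Iio y) = μ.real (Iic x) + μ.real (Ioo x y) := by
      rw [← Iic_union_Ioo_eq_Iio hxy, measureReal_union
        ((Iic_disjoint_Ioi le_rfl).mono_right Ioo_subset_Ioi_self) measurableSet_Ioo]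
    have hIoc : μ.real (Ioc x y) = μ.real (Ioo x y) + μ.real {y} := by
      rw [← Ioo_insert_right hxy, insert_eq, union_comm, measureReal_union (by simp)
        (measurableSet_singleton y)]
    have hpos : 0 < μ.real (Ioc x y) := ENNReal.toReal_pos (hy x hxy) (measure_ne_top μ _)
    have hIoo : 0 ≤ μ.real (Ioo x y) := measureReal_nonneg
    rw [cdf_eq_real]
    nlinarith [hu.1, hu.2]
  refine le_antisymm (iInf₂_le y hle) (le_iInf₂ fun x hx ↦ ?_)
  exact EReal.coe_le_coe_iff.2 (not_lt.1 fun hxy ↦ (hlt x hxy).not_ge hx)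

lemma measure_setOf_lt_and_measure_Ioc_eq_zero (μ : Measure ℝ) [IsFiniteMeasure μ] (a : ℝ) :
    μ {y | a < y ∧ μ (Ioc a y) = 0} = 0 := by
  have hconn : OrdConnected {y | a < y ∧ μ (Ioc a y) = 0} := by
    refine ⟨fun _ hy _ hz w hw ↦ (?_ : a < w ∧ μ (Ioc a w) = 0)⟩
    exact ⟨hy.1.trans_le hw.1, measure_mono_null (Ioc_subset_Ioc_right hw.2) hz.2⟩
  simp only [hconn.measurableSet.measure_eq_iSup_isCompact, ENNReal.iSup_eq_zero]
  intro K hKE hK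
  rcases K.eq_empty_or_nonempty with rfl | hne
  · exact measure_empty
  have hK_sub : K ⊆ Ioc a (sSup K) := fun k hk ↦ ⟨(hKE hk).1, le_csSup hK.bddAbove hk⟩
  exact measure_mono_null hK_sub (hKE (hK.sSup_mem hne)).2

lemma ae_forall_lt_measure_Ioc_ne_zero (μ : Measure ℝ) [IsFiniteMeasure μ] :
    ∀ᵐ y ∂μ, ∀ x < y, μ (Ioc x y) ≠ 0 := by
  have hq : ∀ᵐ y ∂μ, ∀ q : ℚ, ¬ ((q : ℝ) < y ∧ μ (Ioc (q : ℝ) y) = 0) :=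
    ae_all_iff.2 fun q ↦ ae_iff.2 (by simpa using measure_setOf_lt_and_measure_Ioc_eq_zero μ q)
  filter_upwards [hq] with y hy x hxy hx
  obtain ⟨q, hxq, hqy⟩ := exists_rat_btwn hxy
  exact hy q ⟨hqy, measure_mono_null (Ioc_subset_Ioc_left hxq.le) hx⟩

variable {Ω : Type*} [MeasurableSpace Ω] {P : Measure Ω}

lemma distTransform_eq {Y : Ω → ℝ} (hY : Measurable Y) (x u : ℝ) :
    distTransform P Y x u = (P.map Y).real (Iio x) + u * (P.map Y).real {x} := by
  simp only [distTransform, measureReal_def, Measure.map_apply hY measurableSet_Iio,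
    Measure.map_apply hY (measurableSet_singleton x)]
  rfl

lemma measurable_distTransform [IsFiniteMeasure P] {Y : Ω → ℝ} (hY : Measurable Y) :
    Measurable fun p : ℝ × ℝ ↦ distTransform P Y p.1 p.2 := by
  have hIio : Monotone fun x ↦ (P.map Y).real (Iio x) :=
    fun _ _ h ↦ measureReal_mono (Iio_subset_Iio h)
  have hIic : Monotone fun x ↦ (P.map Y).real (Iic x) :=
    fun _ _ h ↦ measureReal_mono (Iic_subset_Iic.2 h)
  have hatom : Measurable fun x ↦ (P.map Y).real {x} := by
    simpa [Pi.sub_def, measureReal_Iic_eq_Iio_add_singleton] using hIic.measurable.sub hIio.measurable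
  simp only [distTransform_eq hY]
  exact (hIio.measurable.comp measurable_fst).add (measurable_snd.mul (hatom.comp measurable_fst))

lemma ae_mem_Ioc_of_map_eq_uniform {W : Ω → ℝ} (hW : Measurable W)
    (hWlaw : P.map W = volume.restrict (Icc 0 1)) : ∀ᵐ ω ∂P, W ω ∈ Ioc (0 : ℝ) 1 := by
  have h : ∀ᵐ u ∂(P.map W), u ∈ Ioc (0 : ℝ) 1 := by
    rw [hWlaw, Measure.restrict_congr_set Ioc_ae_eq_Icc.symm]
    exact ae_restrict_mem measurableSet_Ioc
  exact ae_of_ae_map hW.aemeasurable h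

lemma ae_quantile_distTransform_eq [IsProbabilityMeasure P] {Y W : Ω → ℝ} (hY : Measurable Y)
    (hW : ∀ᵐ ω ∂P, W ω ∈ Ioc 0 1) :
    ∀ᵐ ω ∂P, (quantile (P.map Y) (distTransform P Y (Y ω) (W ω))).toReal = Y ω := by
  have _ : IsProbabilityMeasure (P.map Y) := Measure.isProbabilityMeasure_map hY.aemeasurable
  have hgood : ∀ᵐ ω ∂P, ∀ x < Y ω, P.map Y (Ioc x (Y ω)) ≠ 0 :=
    ae_of_ae_map hY.aemeasurable (ae_forall_lt_measure_Ioc_ne_zero _)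
  filter_upwards [hW, hgood] with ω hu hy
  rw [distTransform_eq hY, quantile_measureReal_Iio_add_mul hu hy, EReal.toReal_coe]

end ProbabilityTheory

/-- The random vectors `X_1,…,X_n` are independent if and only if their
componentwise distributional transforms `T_{X_1}(X_1,U_1),…,T_{X_n}(X_n,U_n)` are
independent, where the `U_{i,k}` are i.i.d. uniform on `[0,1]` and independent of `X`. -/
theorem distTransform_indep_iff {Ω : Type*} [MeasurableSpace Ω]
    (P : Measure Ω) [IsProbabilityMeasure P] {n : ℕ} {d : Fin n → ℕ}
    (X U : (i : Fin n) → Ω → (Fin (d i) → ℝ))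
    (hX : ∀ i, Measurable (X i)) (hU : ∀ i, Measurable (U i))
    (hUunif : ∀ (i : Fin n) (k : Fin (d i)),
      Measure.map (fun ω => U i ω k) P = volume.restrict (Icc (0:ℝ) 1))
    (hUcomp : iIndepFun
      (fun (p : Σ i : Fin n, Fin (d i)) ω => U p.1 ω p.2) P)
    (hXU : IndepFun (fun ω i => X i ω) (fun ω i => U i ω) P) :
    iIndepFun X P ↔
      iIndepFun
        (fun (i : Fin n) (ω : Ω) (k : Fin (d i)) =>
          distTransform P (fun ω' => X i ω' k) (X i ω k) (U i ω k)) P := by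
  have hXk i k : Measurable fun ω ↦ X i ω k := (measurable_pi_apply k).comp (hX i)
  have hUk i k : Measurable fun ω ↦ U i ω k := (measurable_pi_apply k).comp (hU i)
  constructor
  · intro hXi
    have hUi : iIndepFun U P := hUcomp.curry (X := fun i k ω ↦ U i ω k) hUk
    refine (hXi.prodMk hX hU hUi hXU).comp
      (fun i q k ↦ distTransform P (fun ω ↦ X i ω k) (q.1 k) (q.2 k)) fun i ↦ ?_
    exact measurable_pi_lambda _ fun k ↦ (measurable_distTransform (P := P) (hXk i k)).comp
      (f := fun q : (Fin (d i) → ℝ) × (Fin (d i) → ℝ) ↦ (q.1 k, q.2 k)) (by fun_prop)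
  · intro hT
    have hquantile i : Measurable fun (v : Fin (d i) → ℝ) k ↦
        (quantile (P.map fun ω ↦ X i ω k) (v k)).toReal :=
      measurable_pi_lambda _ fun k ↦
        ((measurable_quantile _).comp (measurable_pi_apply k)).ereal_toReal
    refine (hT.comp _ hquantile).congr fun i ↦ ?_
    have hrecover := ae_all_iff.2 fun k ↦ ae_quantile_distTransform_eq (hXk i k)
      (ae_mem_Ioc_of_map_eq_uniform (hUk i k) (hUunif i k))
    filter_upwards [hrecover] with ω hω
    exact funext hω
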